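/- For m ≠ n natural numbers, the Lie algebras g(m) and g(n) over C[x] are not isomorphic as Lie algebras over C[x]. -/
import Mathlib


open Polynomial

/-- The bracket of the family `g(n)` on the free `ℂ[x]`-module with
basis `H = e 0`, `X = e 1`, `Y = e 2`, determined by
`[H,X] = 2X`, `[H,Y] = -2Y`, `[X,Y] = x^n • H`. -/
noncomputable def br (n : ℕ) (a b : Fin 3 → Polynomial ℂ) : Fin 3 → Polynomial ℂ :=
  ![X ^ n * (a 1 * b 2 - a 2 * b 1),
    2 * (a 0 * b 1 - a 1 * b 0),
    (-2) * (a 0 * b 2 - a 2 * b 0)]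

lemma gm_aux (m n : ℕ) (h : m < n)
    (e : (Fin 3 → Polynomial ℂ) ≃ₗ[Polynomial ℂ] (Fin 3 → Polynomial ℂ))
    (he : ∀ a b, e (br m a b) = br n (e a) (e b)) : False := by
  set z := e.symm ![1, 0, 0] with hz
  have key : ((2 * X ^ m : Polynomial ℂ)) • z =
      br m ![0, 2 * z 0, 0] ![0, 0, 1] +
      br m ![1, 0, 0] ![0, X ^ m * z 1, 0] +
      br m ![1, 0, 0] ![0, 0, -(X ^ m * z 2)] := by
    funext i
    fin_cases i <;>
      simp [br, Pi.smul_apply, smul_eq_mul] <;> ring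
  have e_eq : e ((2 * X ^ m : Polynomial ℂ) • z) =
      (2 * X ^ m : Polynomial ℂ) • (![1, 0, 0] : Fin 3 → Polynomial ℂ) := by
    rw [map_smul, hz, e.apply_symm_apply]
  have e_eq2 : e ((2 * X ^ m : Polynomial ℂ) • z) =
      br n (e ![0, 2 * z 0, 0]) (e ![0, 0, 1]) +
      br n (e ![1, 0, 0]) (e ![0, X ^ m * z 1, 0]) +
      br n (e ![1, 0, 0]) (e ![0, 0, -(X ^ m * z 2)]) := by
    rw [key, map_add, map_add, he, he, he]
  have h0 := congrFun (e_eq.symm.trans e_eq2) 0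
  simp only [Pi.add_apply, Pi.smul_apply, smul_eq_mul, br, Matrix.cons_val_zero,
    mul_one] at h0
  have hdvd : (X : Polynomial ℂ) ^ n ∣ 2 * X ^ m := by
    rw [h0]
    exact dvd_add (dvd_add (Dvd.intro _ rfl) (Dvd.intro _ rfl)) (Dvd.intro _ rfl)
  rw [Polynomial.X_pow_dvd_iff] at hdvd
  have hc := hdvd m h
  rw [two_mul, Polynomial.coeff_add, Polynomial.coeff_X_pow] at hc
  simp at hc

/-- For `m ≠ n`, the Lie algebras `g(m)` and `g(n)` over `ℂ[x]` are
not isomorphic: there is no `ℂ[x]`-linear equivalence intertwining the two brackets. -/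
theorem gm_not_iso_gn (m n : ℕ) (hmn : m ≠ n) :
    ¬ ∃ e : (Fin 3 → Polynomial ℂ) ≃ₗ[Polynomial ℂ] (Fin 3 → Polynomial ℂ),
        ∀ a b, e (br m a b) = br n (e a) (e b) := by
  rintro ⟨e, he⟩
  rcases lt_or_gt_of_ne hmn with h | h
  · exact gm_aux m n h e he
  · refine gm_aux n m h e.symm (fun a b => ?_)
    apply e.injective
    rw [e.apply_symm_apply, he, e.apply_symm_apply, e.apply_symm_apply]
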